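/- Let E be a module with a bilinear bracket [·,·] and let I, J : E → E be anti-commuting linear maps. Then for all X, Y in E: 2·T(I∘J)(X,Y) = T(I)(JX,JY) - J(T(I)(JX,Y) + T(I)(X,JY)) - J^2(T(I)(X,Y)) + T(J)(IX,IY) - I(T(J)(IX,Y) + T(J)(X,IY)) - I^2(T(J)(X,Y)). -/

import Mathlib

/-!
Expand every torsion by bilinearity and push `I` past `J` using `IJ = -JI`, so that every
composite of `I` and `J` is `±` a word with all `J`'s in front. The right-hand side then collapses
to twice the expansion of `T(IJ)(X,Y)`: each of its terms arises once from the `T(I)` half and once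
from the `T(J)` half, e.g. `[IJX, IJY]` from `T(I)(JX,JY)` and `[JIX, JIY] = [IJX, IJY]` from
`T(J)(IX,IY)`.
-/

variable {R : Type*} [CommRing R] {E : Type*} [AddCommGroup E] [Module R E]

/-- The underlying binary operation of a bilinear bracket. -/
def br2 (b : E →ₗ[R] E →ₗ[R] E) : E → E → E := fun x y => b x y

/-- Deformation of a bracket `b` by an endomorphism `I`:
`[X,Y]_I = [IX,Y] + [X,IY] - I [X,Y]`. -/
def deform (I : Module.End R E) (b : E → E → E) : E → E → E :=
  fun X Y => b (I X) Y + b X (I Y) - I (b X Y)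

/-- Nijenhuis torsion of `I` with respect to the bracket `b`. -/
def torsion (I : Module.End R E) (b : E → E → E) : E → E → E :=
  fun X Y => b (I X) (I Y) - I (deform I b X Y)

theorem torsion_br2_apply (b : E →ₗ[R] E →ₗ[R] E) (K : Module.End R E) (X Y : E) :
    torsion K (br2 b) X Y
      = b (K X) (K Y) - K (b (K X) Y) - K (b X (K Y)) + (K ^ 2) (b X Y) := by
  simp only [torsion, deform, br2, map_sub, map_add, pow_two, Module.End.mul_apply]
  abel

theorem Module.End.apply_apply_eq_neg_of_mul_eq_neg {I J : Module.End R E}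
    (hanti : I * J = -(J * I)) (x : E) : I (J x) = -J (I x) :=
  LinearMap.congr_fun hanti x

theorem stmt12 (b : E →ₗ[R] E →ₗ[R] E) (I J : Module.End R E)
    (hanti : I * J = -(J * I)) (X Y : E) :
    (2 : ℕ) • torsion (I * J) (br2 b) X Y
      = torsion I (br2 b) (J X) (J Y)
        - J (torsion I (br2 b) (J X) Y + torsion I (br2 b) X (J Y))
        - (J ^ 2) (torsion I (br2 b) X Y)
        + torsion J (br2 b) (I X) (I Y)
        - I (torsion J (br2 b) (I X) Y + torsion J (br2 b) X (I Y))
        - (I ^ 2) (torsion J (br2 b) X Y) := by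
  simp only [torsion_br2_apply, pow_two, Module.End.mul_apply,
    Module.End.apply_apply_eq_neg_of_mul_eq_neg hanti, map_add, map_sub, map_neg,
    LinearMap.neg_apply, two_smul]
  abel
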